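/- For every n ≥ 1 and every x ∈ ℝ, the number of words i ∈ T_n such that x lies in the interval I_i = S_i([0,9/2]) is at most 2. -/
import Mathlib


/-- The alphabet `A = {0, 1, 3}`. -/
def A : Set ℕ := {0, 1, 3}

/-- The composition `S_w = S_{w_1} ∘ ... ∘ S_{w_n}` where `S_i(x) = x/3 + i`. -/
noncomputable def Sw (w : List ℕ) (x : ℝ) : ℝ :=
  w.foldr (fun a y => y / 3 + (a : ℝ)) x

/-- `T_n`: words of length `n` over `A` containing no consecutive pair `(0,3)`. -/
def Tset (n : ℕ) : Set (List ℕ) :=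
  {l | l.length = n ∧ (∀ x ∈ l, x ∈ A) ∧ ¬ [0, 3] <:+: l}

/-- The integer code of a word: `Nw w = Σ wₖ 3^(n-k)`. -/
def Nw : List ℕ → ℕ
  | [] => 0
  | a :: w => a * 3 ^ w.length + Nw w

lemma Sw_eq (w : List ℕ) (x : ℝ) : Sw w x * 3 ^ w.length = 3 * Nw w + x := by
  induction w with
  | nil => simp [Sw, Nw]
  | cons a w ih =>
    have h : Sw (a :: w) x = Sw w x / 3 + a := rfl
    rw [h]
    push_cast [Nw, List.length_cons, pow_succ]
    push_cast at ih
    nlinarith [ih]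

lemma Nw_bound (w : List ℕ) (h : ∀ d ∈ w, d ∈ A) : 2 * Nw w + 3 ≤ 3 ^ (w.length + 1) := by
  induction w with
  | nil => simp [Nw]
  | cons a w ih =>
    have ha : a ∈ A := h a (by simp)
    have ha3 : a ≤ 3 := by simp [A] at ha; rcases ha with h|h|h <;> omega
    have hb := ih (fun d hd => h d (by simp [hd]))
    simp only [Nw, List.length_cons]
    have h1 : (3:ℕ) ^ (w.length + 1 + 1) = 9 * 3 ^ w.length := by ring
    have h2 : (3:ℕ) ^ (w.length + 1) = 3 * 3 ^ w.length := by ring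
    have h3 : a * 3 ^ w.length ≤ 3 * 3 ^ w.length := Nat.mul_le_mul_right _ ha3
    omega

lemma infix_tail {l : List ℕ} {a : ℕ} {w : List ℕ} (h : l <:+: w) : l <:+: a :: w := by
  obtain ⟨s, t, hst⟩ := h
  exact ⟨a :: s, t, by simp [← hst]⟩

lemma key (a b : ℕ) (w w' : List ℕ) (hlen : w.length = w'.length)
    (hw : ∀ d ∈ a :: w, d ∈ A) (hw' : ∀ d ∈ b :: w', d ∈ A)
    (hinf : ¬ [0, 3] <:+: a :: w)
    (heq : Nw (a :: w) = Nw (b :: w')) (hab : a < b) : False := by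
  have ha : a = 0 ∨ a = 1 ∨ a = 3 := by have := hw a (by simp); simpa [A] using this
  have hb : b = 0 ∨ b = 1 ∨ b = 3 := by have := hw' b (by simp); simpa [A] using this
  have bw : 2 * Nw w + 3 ≤ 3 ^ (w.length + 1) := Nw_bound w (fun d hd => hw d (by simp [hd]))
  have bw' : 2 * Nw w' + 3 ≤ 3 ^ (w'.length + 1) := Nw_bound w' (fun d hd => hw' d (by simp [hd]))
  simp only [Nw] at heq
  rw [hlen] at heq bw
  set L := w'.length with hL
  have h2 : (3:ℕ) ^ (L + 1) = 3 * 3 ^ L := by ring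
  by_cases hd2 : b - a ≥ 2
  · have h3 : a * 3 ^ L + 2 * 3 ^ L ≤ b * 3 ^ L := by
      calc a * 3 ^ L + 2 * 3 ^ L = (a + 2) * 3 ^ L := by ring
        _ ≤ b * 3 ^ L := Nat.mul_le_mul_right _ (by omega)
    omega
  · -- b = a + 1, so (a,b) = (0,1)
    have hab1 : a = 0 ∧ b = 1 := by omega
    obtain ⟨rfl, rfl⟩ := hab1
    have hNw : Nw w = 3 ^ L + Nw w' := by omega
    match w, hlen with
    | [], hlen =>
      simp [Nw] at hNw
      have : (1:ℕ) ≤ 3 ^ L := Nat.one_le_pow _ _ (by norm_num)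
      omega
    | c :: v, hlen =>
      have hc : c = 0 ∨ c = 1 ∨ c = 3 := by have := hw c (by simp); simpa [A] using this
      have hLv : L = v.length + 1 := by simpa using hlen.symm
      simp only [Nw] at hNw
      have bv : 2 * Nw v + 3 ≤ 3 ^ (v.length + 1) := Nw_bound v (fun d hd => hw d (by simp [hd]))
      have hc3 : c = 3 := by
        rcases hc with rfl | rfl | rfl
        · exfalso
          have h4 : (3:ℕ) ^ L = 3 * 3 ^ v.length := by rw [hLv]; ring
          have h5 : (3:ℕ) ^ (v.length + 1) = 3 * 3 ^ v.length := by ring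
          omega
        · exfalso
          have h4 : (3:ℕ) ^ L = 3 * 3 ^ v.length := by rw [hLv]; ring
          have h5 : (3:ℕ) ^ (v.length + 1) = 3 * 3 ^ v.length := by ring
          omega
        · rfl
      subst hc3
      exact hinf ⟨[], v, rfl⟩

lemma Nw_inj : ∀ w w' : List ℕ, w.length = w'.length →
    (∀ d ∈ w, d ∈ A) → (∀ d ∈ w', d ∈ A) →
    ¬ [0, 3] <:+: w → ¬ [0, 3] <:+: w' → Nw w = Nw w' → w = w' := by
  intro w
  induction w with
  | nil => intro w' hlen _ _ _ _ _; simpa using (List.length_eq_zero_iff.mp hlen.symm).symm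
  | cons a w ih =>
    intro w' hlen hA hA' hi hi' heq
    match w', hlen with
    | b :: w'', hlen =>
      have hlen' : w.length = w''.length := by simpa using hlen
      rcases lt_trichotomy a b with h | rfl | h
      · exact absurd (key a b w w'' hlen' hA hA' hi heq h) not_false
      · have heq' : Nw w = Nw w'' := by
          simp only [Nw] at heq; rw [hlen'] at heq; omega
        have : w = w'' := ih w'' hlen' (fun d hd => hA d (by simp [hd]))
          (fun d hd => hA' d (by simp [hd]))
          (fun h => hi (infix_tail h)) (fun h => hi' (infix_tail h)) heq'
        rw [this]
      · exact absurd (key b a w'' w hlen'.symm hA' hA hi' heq.symm h) not_false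

/-- For every `n ≥ 1` and `x ∈ ℝ`, at most two words `i ∈ T_n` satisfy
`x ∈ I_i = S_i([0, 9/2])`. -/
theorem stmt_6 (n : ℕ) (hn : 1 ≤ n) (x : ℝ) :
    ∃ a b : List ℕ,
      {i | i ∈ Tset n ∧ x ∈ Sw i '' Set.Icc 0 (9 / 2)} ⊆ {a, b} := by
  set s : Set (List ℕ) := {i | i ∈ Tset n ∧ x ∈ Sw i '' Set.Icc 0 (9 / 2)} with hs
  -- any two members have codes differing by at most 1
  have near : ∀ i ∈ s, ∀ j ∈ s, Nw i ≤ Nw j + 1 := by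
    rintro i ⟨⟨hleni, _, _⟩, y, ⟨hy0, hy1⟩, hyx⟩ j ⟨⟨hlenj, _, _⟩, z, ⟨hz0, hz1⟩, hzx⟩
    have ei : (3:ℝ) * Nw i + y = x * 3 ^ n := by
      rw [← hyx, ← hleni, Sw_eq]
    have ej : (3:ℝ) * Nw j + z = x * 3 ^ n := by
      rw [← hzx, ← hlenj, Sw_eq]
    have : (Nw i : ℝ) < (Nw j : ℝ) + 2 := by linarith
    have h2 : Nw i < Nw j + 2 := by exact_mod_cast this
    omega
  -- no three distinct members
  have no3 : ∀ i ∈ s, ∀ j ∈ s, ∀ k ∈ s, i = j ∨ i = k ∨ j = k := by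
    intro i hi j hj k hk
    have inj : ∀ p ∈ s, ∀ q ∈ s, Nw p = Nw q → p = q := by
      rintro p ⟨⟨hlp, hAp, hip⟩, _⟩ q ⟨⟨hlq, hAq, hiq⟩, _⟩ hpq
      exact Nw_inj p q (hlp.trans hlq.symm) hAp hAq hip hiq hpq
    have h1 := near i hi j hj; have h2 := near j hj i hi
    have h3 := near i hi k hk; have h4 := near k hk i hi
    have h5 := near j hj k hk; have h6 := near k hk j hj
    have : Nw i = Nw j ∨ Nw i = Nw k ∨ Nw j = Nw k := by omega
    rcases this with h | h | h
    · exact Or.inl (inj i hi j hj h)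
    · exact Or.inr (Or.inl (inj i hi k hk h))
    · exact Or.inr (Or.inr (inj j hj k hk h))
  by_cases h1 : s.Nonempty
  · obtain ⟨a, ha⟩ := h1
    by_cases h2 : (s \ {a}).Nonempty
    · obtain ⟨b, hb, hba⟩ := h2
      refine ⟨a, b, fun p hp => ?_⟩
      rcases no3 p hp a ha b hb with h | h | h
      · exact Or.inl h
      · exact Or.inr h
      · exact absurd h.symm hba
    · refine ⟨a, a, fun p hp => ?_⟩
      by_contra hpa
      exact h2 ⟨p, hp, fun hp' => hpa (by simp at hp' ⊢; tauto)⟩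
  · exact ⟨[], [], fun p hp => absurd ⟨p, hp⟩ h1⟩
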